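/- Let Q and Q′ be normal coordinates for germs at 0 of real-analytic hypersurfaces M, M′ ⊂ ℂ², and let H = (F,G) : (ℂ²,0) → (ℂ²,0) be a holomorphic map satisfying the mapping identity for (Q,Q′). Then for all χ ∈ ℂ near 0, conj(∂_wG(conj χ, 0)) = ∂_wG(0,0) − q′_{10}(F̄(χ,0)) · ∂_wF(0,0), where q′_{10}(χ′) := ∂_{z′}Q′(0,χ′,0) and F̄(χ,τ) := conj(F(conj χ, conj τ)). In particular, taking χ = 0 and using q′_{10}(0) = 0, the derivative ∂_wG(0,0) is a real number. -/

import Mathlib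

open Filter Topology Matrix

noncomputable section

/-- Complex conjugation as a plain function. -/
def cj : ℂ → ℂ := (starRingEnd ℂ)

/-- Iterated partial derivative `∂_z^i ∂_w^j F (z, w)` of `F : ℂ → ℂ → ℂ`. -/
def pd (F : ℂ → ℂ → ℂ) (i j : ℕ) (z w : ℂ) : ℂ :=
  deriv^[i] (fun z' => deriv^[j] (F z') w) z

/-- `Q` is a normal-coordinates defining function (near `0`) of a germ of a
real-analytic hypersurface in `ℂ²`. -/
def IsNormalCoord (Q : ℂ → ℂ → ℂ → ℂ) : Prop :=
  AnalyticAt ℂ (fun p : ℂ × ℂ × ℂ => Q p.1 p.2.1 p.2.2) 0 ∧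
  (∀ᶠ p : ℂ × ℂ in 𝓝 0, Q p.1 0 p.2 = p.2) ∧
  (∀ᶠ p : ℂ × ℂ in 𝓝 0, Q 0 p.1 p.2 = p.2) ∧
  (∀ᶠ p : ℂ × ℂ × ℂ in 𝓝 0, Q p.1 p.2.1 (cj (Q (cj p.2.1) (cj p.1) (cj p.2.2))) = p.2.2)

/-- The mapping identity expressing that the germ at `0` of the holomorphic map
`H = (F, G)` (with `H(0) = 0`) sends the hypersurface defined by `Q` into the one
defined by `Q'`. -/
def SendsInto (Q Q' : ℂ → ℂ → ℂ → ℂ) (F G : ℂ → ℂ → ℂ) : Prop :=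
  AnalyticAt ℂ (fun p : ℂ × ℂ => F p.1 p.2) 0 ∧
  AnalyticAt ℂ (fun p : ℂ × ℂ => G p.1 p.2) 0 ∧
  F 0 0 = 0 ∧ G 0 0 = 0 ∧
  ∀ᶠ p : ℂ × ℂ × ℂ in 𝓝 0,
    G p.1 (Q p.1 p.2.1 p.2.2) =
      Q' (F p.1 (Q p.1 p.2.1 p.2.2)) (cj (F (cj p.2.1) (cj p.2.2))) (cj (G (cj p.2.1) (cj p.2.2)))

/-- Determinant of the Jacobian matrix of `H = (F, G)` at `0`. -/
def JacDet (F G : ℂ → ℂ → ℂ) : ℂ :=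
  pd F 1 0 0 0 * pd G 0 1 0 0 - pd F 0 1 0 0 * pd G 1 0 0 0

/-- The hypersurface defined by `Q` is not Levi-flat near `0`, i.e. `Q(z,χ,τ) ≢ τ`. -/
def NotLeviFlat (Q : ℂ → ℂ → ℂ → ℂ) : Prop :=
  ¬ ∀ᶠ p : ℂ × ℂ × ℂ in 𝓝 0, Q p.1 p.2.1 p.2.2 = p.2.2

/-- The hypersurface defined by `Q` is of finite type at `0`, i.e. `Q(z,χ,0) ≢ 0`. -/
def FiniteTypeAt (Q : ℂ → ℂ → ℂ → ℂ) : Prop :=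
  ¬ ∀ᶠ p : ℂ × ℂ in 𝓝 0, Q p.1 p.2 0 = 0

/-- `q_{αμ}(χ) = ∂_z^α ∂_τ^μ Q(0, χ, 0)`. -/
def qd (Q : ℂ → ℂ → ℂ → ℂ) (α μ : ℕ) (χ : ℂ) : ℂ :=
  deriv^[α] (fun z => deriv^[μ] (fun τ => Q z χ τ) 0) 0

/-- The hypersurface (germ) defined by `Q` as a subset of `ℂ²`. -/
def MSet (Q : ℂ → ℂ → ℂ → ℂ) : Set (ℂ × ℂ) := {p | p.2 = Q p.1 (cj p.1) (cj p.2)}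

/-!
Put `z = 0` in the mapping identity: since `Q(0, χ, τ) = τ` it becomes
`G(0, τ) = Q'(F(0, τ), F̄(χ, τ), Ḡ(χ, τ))`. At `τ = 0` the normality `Q'(0, χ', τ') = τ'` forces
`Ḡ(χ, 0) = 0`, so differentiating in `τ` at `τ = 0` evaluates the derivative of `Q'` at
`(0, F̄(χ, 0), 0)`, where the same normality gives `∂_{χ'}Q' = 0` and `∂_{τ'}Q' = 1`; the chain rule
leaves exactly `∂_w G(0, 0) = q'₁₀(F̄(χ, 0)) ∂_w F(0, 0) + conj (∂_w G(conj χ, 0))`.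
For `χ = 0`, `q'₁₀(0) = 0` because `Q'(z, 0, 0) = 0`, so `∂_w G(0, 0)` equals its conjugate.
-/

lemma cj_zero : cj 0 = 0 := map_zero _

lemma continuous_cj : Continuous cj := Complex.continuous_conj

lemma pd_zero_one (G : ℂ → ℂ → ℂ) : pd G 0 1 0 0 = deriv (G 0) 0 := rfl

lemma qd_one_zero (Q : ℂ → ℂ → ℂ → ℂ) (χ : ℂ) :
    qd Q 1 0 χ = deriv (fun z => Q z χ 0) 0 := rfl

lemma qd_one_zero_zero {Q : ℂ → ℂ → ℂ → ℂ} (hQ : ∀ᶠ p : ℂ × ℂ in 𝓝 0, Q p.1 0 p.2 = p.2) :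
    qd Q 1 0 0 = 0 := by
  have hline : (fun z => Q z 0 0) =ᶠ[𝓝 0] fun _ => 0 :=
    ((continuous_id.prodMk continuous_const).tendsto' (0 : ℂ) 0 rfl).eventually hQ
  rw [qd_one_zero, hline.deriv_eq, deriv_const]

lemma HasDerivAt.cj_comp_cj {f : ℂ → ℂ} {f' x : ℂ} (hf : HasDerivAt f f' x) :
    HasDerivAt (fun τ => cj (f (cj τ))) (cj f') (cj x) :=
  hf.conj_conj

lemma AnalyticAt.eventually_differentiableAt_slice {𝕜 E F G : Type*} [NontriviallyNormedField 𝕜]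
    [NormedAddCommGroup E] [NormedSpace 𝕜 E] [NormedAddCommGroup F] [NormedSpace 𝕜 F]
    [NormedAddCommGroup G] [NormedSpace 𝕜 G] [CompleteSpace G] {f : E → F → G} {x : E} {y : F}
    (hf : AnalyticAt 𝕜 (fun p : E × F => f p.1 p.2) (x, y)) :
    ∀ᶠ x' in 𝓝 x, DifferentiableAt 𝕜 (f x') y := by
  have hslice : Tendsto (fun x' : E => (x', y)) (𝓝 x) (𝓝 (x, y)) :=
    (continuous_id.prodMk continuous_const).tendsto x
  filter_upwards [hslice.eventually hf.eventually_analyticAt] with x' hx'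
  exact hx'.differentiableAt.comp y ((differentiableAt_const x').prodMk differentiableAt_id)

lemma tendsto_cj_apply_cj_zero {f : ℂ → ℂ → ℂ}
    (hf : ContinuousAt (fun p : ℂ × ℂ => f p.1 p.2) 0) (hf0 : f 0 0 = 0) :
    Tendsto (fun χ => cj (f (cj χ) 0)) (𝓝 0) (𝓝 0) := by
  have hin : Tendsto (fun χ : ℂ => (cj χ, (0 : ℂ))) (𝓝 0) (𝓝 0) :=
    (continuous_cj.prodMk continuous_const).tendsto' 0 0 (by simp [cj_zero])
  have hval : Tendsto (fun χ => f (cj χ) 0) (𝓝 0) (𝓝 0) := by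
    simpa [hf0, Function.comp_def] using hf.tendsto.comp hin
  exact (continuous_cj.tendsto' 0 0 cj_zero).comp hval

lemma hasDerivAt_comp_of_slice_eq_snd {𝕜 : Type*} [NontriviallyNormedField 𝕜]
    {Φ : 𝕜 → 𝕜 → 𝕜 → 𝕜} {y₀ : 𝕜}
    (hΦ : DifferentiableAt 𝕜 (fun p : 𝕜 × 𝕜 × 𝕜 => Φ p.1 p.2.1 p.2.2) (0, y₀, 0))
    (hslice : ∀ᶠ p : 𝕜 × 𝕜 in 𝓝 (y₀, 0), Φ 0 p.1 p.2 = p.2)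
    {u v w : 𝕜 → 𝕜} {a b c t : 𝕜} (hu : HasDerivAt u a t) (hv : HasDerivAt v b t)
    (hw : HasDerivAt w c t) (hut : u t = 0) (hvt : v t = y₀) (hwt : w t = 0) :
    HasDerivAt (fun s => Φ (u s) (v s) (w s)) (deriv (fun z => Φ z y₀ 0) 0 * a + c) t := by
  set L := fderiv 𝕜 (fun p : 𝕜 × 𝕜 × 𝕜 => Φ p.1 p.2.1 p.2.2) (0, y₀, 0)
  have hL := hΦ.hasFDerivAt
  have hcomp : HasDerivAt (fun s => Φ (u s) (v s) (w s)) (L (a, b, c)) t :=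
    hL.comp_hasDerivAt_of_eq t (hu.prodMk (hv.prodMk hw)) (by rw [hut, hvt, hwt])
  have hz : L (1, 0, 0) = deriv (fun z => Φ z y₀ 0) 0 :=
    (hL.comp_hasDerivAt_of_eq 0 ((hasDerivAt_id (0 : 𝕜)).prodMk
      ((hasDerivAt_const _ y₀).prodMk (hasDerivAt_const _ 0))) rfl).deriv.symm
  have hyt : L (0, b, c) = c := by
    have hline : HasDerivAt (fun s : 𝕜 => ((0 : 𝕜), y₀ + s * b, s * c)) (0, b, c) 0 := by
      simpa using (hasDerivAt_const (0 : 𝕜) (0 : 𝕜)).prodMk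
        (((hasDerivAt_id 0).mul_const b).const_add y₀ |>.prodMk ((hasDerivAt_id 0).mul_const c))
    have hon : ∀ᶠ s : 𝕜 in 𝓝 0, Φ 0 (y₀ + s * b) (s * c) = s * c := by
      have : Tendsto (fun s : 𝕜 => (y₀ + s * b, s * c)) (𝓝 0) (𝓝 (y₀, 0)) :=
        Continuous.tendsto' (by fun_prop) 0 _ (by simp)
      exact this.eventually hslice
    exact (hL.comp_hasDerivAt_of_eq 0 hline (by simp)).unique
      (((hasDerivAt_id 0).mul_const c).congr_of_eventuallyEq hon |>.congr_deriv (one_mul c))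
  have hsplit : L (a, b, c) = a * L (1, 0, 0) + L (0, b, c) := by
    rw [← smul_eq_mul, ← L.map_smul, ← L.map_add]
    simp
  rw [hsplit, hz, hyt, mul_comm] at hcomp
  exact hcomp

section MappingIdentity

variable {Q Q' : ℂ → ℂ → ℂ → ℂ} {F G : ℂ → ℂ → ℂ}

lemma SendsInto.eventually_segre (hQ : ∀ᶠ p : ℂ × ℂ in 𝓝 0, Q 0 p.1 p.2 = p.2)
    (h : SendsInto Q Q' F G) :
    ∀ᶠ χ in 𝓝 0, ∀ᶠ τ in 𝓝 0,
      G 0 τ = Q' (F 0 τ) (cj (F (cj χ) (cj τ))) (cj (G (cj χ) (cj τ))) := by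
  have hin : Tendsto (fun p : ℂ × ℂ => ((0 : ℂ), p.1, p.2)) (𝓝 0) (𝓝 0) :=
    Continuous.tendsto' (by fun_prop) 0 0 rfl
  have hpair : ∀ᶠ p : ℂ × ℂ in 𝓝 ((0 : ℂ), (0 : ℂ)),
      G 0 p.2 = Q' (F 0 p.2) (cj (F (cj p.1) (cj p.2))) (cj (G (cj p.1) (cj p.2))) := by
    filter_upwards [hin.eventually h.2.2.2.2, hQ] with p hmap hnorm
    rwa [hnorm] at hmap
  exact hpair.curry_nhds

lemma SendsInto.eventually_cj_G_eq_zero (hQ : ∀ᶠ p : ℂ × ℂ in 𝓝 0, Q 0 p.1 p.2 = p.2)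
    (hQ' : ∀ᶠ p : ℂ × ℂ in 𝓝 0, Q' 0 p.1 p.2 = p.2) (h : SendsInto Q Q' F G) :
    ∀ᶠ χ in 𝓝 0, cj (G (cj χ) 0) = 0 := by
  have hsegre := h.eventually_segre hQ
  obtain ⟨hF, hG, hF0, hG0, -⟩ := h
  have hin : Tendsto (fun χ => (cj (F (cj χ) 0), cj (G (cj χ) 0))) (𝓝 0) (𝓝 0) :=
    (tendsto_cj_apply_cj_zero hF.continuousAt hF0).prodMk_nhds
      (tendsto_cj_apply_cj_zero hG.continuousAt hG0)
  filter_upwards [hsegre, hin.eventually hQ'] with χ hseg hnorm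
  have h0 := hseg.self_of_nhds
  rw [cj_zero, hF0, hG0, hnorm] at h0
  exact h0.symm

lemma hasDerivAt_of_segre_identity {χ : ℂ}
    (hQ' : DifferentiableAt ℂ (fun p : ℂ × ℂ × ℂ => Q' p.1 p.2.1 p.2.2)
      (0, cj (F (cj χ) 0), 0))
    (hQ'slice : ∀ᶠ p : ℂ × ℂ in 𝓝 (cj (F (cj χ) 0), 0), Q' 0 p.1 p.2 = p.2)
    (hF : DifferentiableAt ℂ (F 0) 0) (hF0 : F 0 0 = 0)
    (hFχ : DifferentiableAt ℂ (F (cj χ)) 0) (hGχ : DifferentiableAt ℂ (G (cj χ)) 0)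
    (hGχ0 : cj (G (cj χ) 0) = 0)
    (hseg : ∀ᶠ τ in 𝓝 0,
      G 0 τ = Q' (F 0 τ) (cj (F (cj χ) (cj τ))) (cj (G (cj χ) (cj τ)))) :
    HasDerivAt (G 0) (qd Q' 1 0 (cj (F (cj χ) 0)) * deriv (F 0) 0 + cj (deriv (G (cj χ)) 0)) 0 := by
  have hbar {f : ℂ → ℂ} (hf : DifferentiableAt ℂ f 0) :
      HasDerivAt (fun τ => cj (f (cj τ))) (cj (deriv f 0)) 0 := by
    simpa only [cj_zero] using hf.hasDerivAt.cj_comp_cj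
  exact (hasDerivAt_comp_of_slice_eq_snd hQ' hQ'slice hF.hasDerivAt (hbar hFχ) (hbar hGχ) hF0
    (by rw [cj_zero]) (by rwa [cj_zero])).congr_of_eventuallyEq hseg

end MappingIdentity

/-- identity (16): for a holomorphic map `H = (F, G)` satisfying the
mapping identity, `conj(∂_w G(conj χ, 0)) = ∂_w G(0) − q'₁₀(F̄(χ,0)) · ∂_w F(0)` for `χ`
near `0`, where `q'₁₀(χ') = ∂_{z'} Q'(0, χ', 0)`; in particular `∂_w G(0)` is real. -/
theorem Gw_along_segre_identity
    (Q Q' : ℂ → ℂ → ℂ → ℂ) (hQ : IsNormalCoord Q) (hQ' : IsNormalCoord Q')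
    (F G : ℂ → ℂ → ℂ) (h : SendsInto Q Q' F G) :
    (∀ᶠ χ : ℂ in 𝓝 0,
      cj (deriv (fun w => G (cj χ) w) 0) =
        pd G 0 1 0 0 - qd Q' 1 0 (cj (F (cj χ) 0)) * pd F 0 1 0 0) ∧
    (pd G 0 1 0 0).im = 0 := by
  have hGbar := h.eventually_cj_G_eq_zero hQ.2.2.1 hQ'.2.2.1
  have hsegre := h.eventually_segre hQ.2.2.1
  obtain ⟨hQ'an, hQ'z, hQ'slice, -⟩ := hQ'
  obtain ⟨hF, hG, hF0, -, -⟩ := h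
  have hFbar := tendsto_cj_apply_cj_zero hF.continuousAt hF0
  have hQ'd : ∀ᶠ χ in 𝓝 0, DifferentiableAt ℂ (fun p : ℂ × ℂ × ℂ => Q' p.1 p.2.1 p.2.2)
      (0, cj (F (cj χ) 0), 0) :=
    (tendsto_const_nhds.prodMk_nhds (hFbar.prodMk_nhds tendsto_const_nhds)).eventually
      (hQ'an.eventually_analyticAt.mono fun _ hp => hp.differentiableAt)
  have hslice := (hFbar.prodMk_nhds tendsto_const_nhds).eventually hQ'slice.eventually_nhds
  have hcj : Tendsto cj (𝓝 0) (𝓝 0) := continuous_cj.tendsto' 0 0 cj_zero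
  have hF' := hF.eventually_differentiableAt_slice
  have hG' := hG.eventually_differentiableAt_slice
  have hderiv : ∀ᶠ χ in 𝓝 0, HasDerivAt (G 0)
      (qd Q' 1 0 (cj (F (cj χ) 0)) * deriv (F 0) 0 + cj (deriv (G (cj χ)) 0)) 0 := by
    filter_upwards [hQ'd, hslice, hcj.eventually hF', hcj.eventually hG', hGbar, hsegre]
      with χ hQ'dχ hsliceχ hFχ hGχ hGχ0 hsegχ
    exact hasDerivAt_of_segre_identity hQ'dχ hsliceχ hF'.self_of_nhds hF0 hFχ hGχ hGχ0 hsegχ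
  have hidentity : ∀ᶠ χ in 𝓝 0, cj (deriv (fun w => G (cj χ) w) 0) =
      pd G 0 1 0 0 - qd Q' 1 0 (cj (F (cj χ) 0)) * pd F 0 1 0 0 :=
    hderiv.mono fun χ hχ => by rw [pd_zero_one, pd_zero_one, hχ.deriv]; ring
  refine ⟨hidentity, ?_⟩
  have h0 := hidentity.self_of_nhds
  rw [cj_zero, hF0, cj_zero, qd_one_zero_zero hQ'z, zero_mul, sub_zero] at h0
  exact Complex.conj_eq_iff_im.1 h0
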